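/- arXiv:1801.02856 — 2 statements merged into one kernel-verified Lean document; each statement's English description precedes it below -/
import Mathlib

section
/- Let a > 0 and q ∈ ℝ, and let w : [0,1]×[0,∞) → ℝ be twice continuously differentiable, satisfying the wave equation ∂²_t w − a² ∂²_x w = 0 on (0,1)×(0,∞), together with the boundary conditions w(1,t) = q·(∂_t w − a ∂_x w)(1,t) and (∂_t w − a ∂_x w)(0,t) = 0 for all t > 0. Then w(x,t) = 0 for every x ∈ [0,1] and every t > 2/a. -/
/-!
The Riemann invariant `u = w_t - a w_x` satisfies `u_t + a u_x = w_tt - a² w_xx = 0`, so it is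
constant along the characteristics `dx/dt = a`; these all start on the left boundary, where
`u = 0`, hence `u(x, t) = 0` for `t > x / a`. The right boundary condition then gives
`w(1, t) = q u(1, t) = 0` for `t > 1 / a`, and `w_t - a w_x = 0` says that `w` is constant along
the characteristics `dx/dt = -a`, which carry this zero from `x = 1` across the interval within
another time `1 / a`.
-/

open Set Function

section LineTransport

variable {E : Type*} [NormedAddCommGroup E] [NormedSpace ℝ E]

theorem hasDerivAt_comp_add_smul {F : Type*} [NormedAddCommGroup F] [NormedSpace ℝ F]
    {f : E → F} {f' : E →L[ℝ] F} {p v : E} {s : ℝ} (hf : HasFDerivAt f f' (p + s • v)) :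
    HasDerivAt (fun s : ℝ => f (p + s • v)) (f' v) s :=
  hf.comp_hasDerivAt s
    ((((hasDerivAt_id s).smul_const v).const_add p).congr_deriv (one_smul ℝ v))

theorem eq_of_fderiv_apply_eq_zero_of_mem_Ioo {f : E → ℝ} (hf : Differentiable ℝ f) {p v : E}
    {L : ℝ} (hL : 0 ≤ L) (h : ∀ s ∈ Ioo 0 L, fderiv ℝ f (p + s • v) v = 0) :
    f (p + L • v) = f p := by
  rcases hL.eq_or_lt with rfl | hL
  · simp
  have hderiv (s : ℝ) : HasDerivAt (fun s : ℝ => f (p + s • v)) (fderiv ℝ f (p + s • v) v) s :=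
    hasDerivAt_comp_add_smul (hf _).hasFDerivAt
  obtain ⟨s, hs, hslope⟩ := exists_hasDerivAt_eq_slope _ _ hL
    (fun s _ => (hderiv s).continuousAt.continuousWithinAt) (fun s _ => hderiv s)
  rw [h s hs, eq_comm, div_eq_zero_iff, sub_eq_zero] at hslope
  simpa using hslope.resolve_right (by linarith)

end LineTransport

theorem IsSymmSndFDerivAt.fderiv_fderiv_add_sub {𝕜 E F : Type*} [NontriviallyNormedField 𝕜]
    [NormedAddCommGroup E] [NormedSpace 𝕜 E] [NormedAddCommGroup F] [NormedSpace 𝕜 F]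
    {f : E → F} {p : E} (hf : IsSymmSndFDerivAt 𝕜 f p) (x y : E) :
    fderiv 𝕜 (fderiv 𝕜 f) p (y + x) (y - x) =
      fderiv 𝕜 (fderiv 𝕜 f) p y y - fderiv 𝕜 (fderiv 𝕜 f) p x x := by
  simp only [map_add, map_sub, add_apply, hf y x]
  abel

theorem fderiv_clm_apply_const_apply {𝕜 E F G : Type*} [NontriviallyNormedField 𝕜]
    [NormedAddCommGroup E] [NormedSpace 𝕜 E] [NormedAddCommGroup F] [NormedSpace 𝕜 F]
    [NormedAddCommGroup G] [NormedSpace 𝕜 G] {c : E → F →L[𝕜] G} {p : E}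
    (hc : DifferentiableAt 𝕜 c p) (v : F) (h : E) :
    fderiv 𝕜 (fun q => c q v) p h = fderiv 𝕜 c p h v := by
  simp [fderiv_clm_apply hc (differentiableAt_const v)]

section TwoVariables

variable {F : Type*} [NormedAddCommGroup F] [NormedSpace ℝ F] {w : ℝ → ℝ → F} {x t : ℝ}

theorem deriv_fst_eq_fderiv_uncurry (hw : DifferentiableAt ℝ (uncurry w) (x, t)) :
    deriv (fun y => w y t) x = fderiv ℝ (uncurry w) (x, t) (1, 0) :=
  (hw.hasFDerivAt.comp_hasDerivAt (f := fun y => (y, t)) x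
    ((hasDerivAt_id x).prodMk (hasDerivAt_const x t))).deriv

theorem deriv_snd_eq_fderiv_uncurry (hw : DifferentiableAt ℝ (uncurry w) (x, t)) :
    deriv (w x) t = fderiv ℝ (uncurry w) (x, t) (0, 1) :=
  (hw.hasFDerivAt.comp_hasDerivAt t ((hasDerivAt_const t x).prodMk (hasDerivAt_id t))).deriv

theorem deriv_deriv_fst_eq_fderiv_fderiv_uncurry (hw : Differentiable ℝ (uncurry w))
    (hw' : DifferentiableAt ℝ (fderiv ℝ (uncurry w)) (x, t)) :
    deriv (fun y => deriv (fun z => w z t) y) x =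
      fderiv ℝ (fderiv ℝ (uncurry w)) (x, t) (1, 0) (1, 0) := by
  simp_rw [deriv_fst_eq_fderiv_uncurry (hw _)]
  exact (deriv_fst_eq_fderiv_uncurry (w := fun y t => fderiv ℝ (uncurry w) (y, t) (1, 0))
    (hw'.clm_apply (differentiableAt_const _))).trans (fderiv_clm_apply_const_apply hw' _ _)

theorem deriv_deriv_snd_eq_fderiv_fderiv_uncurry (hw : Differentiable ℝ (uncurry w))
    (hw' : DifferentiableAt ℝ (fderiv ℝ (uncurry w)) (x, t)) :
    deriv (deriv (w x)) t = fderiv ℝ (fderiv ℝ (uncurry w)) (x, t) (0, 1) (0, 1) := by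
  rw [show deriv (w x) = fun s => fderiv ℝ (uncurry w) (x, s) (0, 1) from
    funext fun s => deriv_snd_eq_fderiv_uncurry (hw _)]
  exact (deriv_snd_eq_fderiv_uncurry (w := fun y t => fderiv ℝ (uncurry w) (y, t) (0, 1))
    (hw'.clm_apply (differentiableAt_const _))).trans (fderiv_clm_apply_const_apply hw' _ _)

end TwoVariables

section WaveEquation

variable {a x t : ℝ} {w : ℝ → ℝ → ℝ}

/-- `w_t - a w_x`, as the derivative of `w` in the direction `(-a, 1)`. -/
noncomputable def riemannInvariant (a : ℝ) (w : ℝ → ℝ → ℝ) (p : ℝ × ℝ) : ℝ :=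
  fderiv ℝ (uncurry w) p (-a, 1)

theorem riemannInvariant_eq (hw : DifferentiableAt ℝ (uncurry w) (x, t)) :
    riemannInvariant a w (x, t) = deriv (w x) t - a * deriv (fun y => w y t) x := by
  have hv : ((-a, 1) : ℝ × ℝ) = (0, 1) - a • (1, 0) := by simp
  rw [riemannInvariant, deriv_snd_eq_fderiv_uncurry hw, deriv_fst_eq_fderiv_uncurry hw, hv,
    map_sub, map_smul, smul_eq_mul]

theorem differentiable_riemannInvariant (hw : Differentiable ℝ (fderiv ℝ (uncurry w))) :
    Differentiable ℝ (riemannInvariant a w) :=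
  fun p => (hw p).clm_apply (differentiableAt_const _)

theorem fderiv_riemannInvariant_apply (hw : ContDiff ℝ 2 (uncurry w)) :
    fderiv ℝ (riemannInvariant a w) (x, t) (a, 1) =
      deriv (deriv (w x)) t - a ^ 2 * deriv (fun y => deriv (fun z => w z t) y) x := by
  have hw₁ : Differentiable ℝ (uncurry w) := hw.differentiable (by norm_num)
  have hw₂ : Differentiable ℝ (fderiv ℝ (uncurry w)) :=
    (hw.fderiv_right (m := 1) (by norm_num)).differentiable (by norm_num)
  have hsymm : IsSymmSndFDerivAt ℝ (uncurry w) (x, t) :=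
    hw.contDiffAt.isSymmSndFDerivAt (by simp)
  have hv : ((a, 1) : ℝ × ℝ) = (0, 1) + a • (1, 0) := by simp [add_comm]
  have hv' : ((-a, 1) : ℝ × ℝ) = (0, 1) - a • (1, 0) := by simp
  unfold riemannInvariant
  rw [fderiv_clm_apply_const_apply (hw₂ _), hv, hv',
    hsymm.fderiv_fderiv_add_sub, deriv_deriv_snd_eq_fderiv_fderiv_uncurry hw₁ (hw₂ _),
    deriv_deriv_fst_eq_fderiv_fderiv_uncurry hw₁ (hw₂ _)]
  simp only [map_smul, smul_apply, smul_eq_mul]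
  ring

end WaveEquation

section Characteristics

variable {a : ℝ} {u : ℝ × ℝ → ℝ}

theorem eq_zero_of_left_boundary_of_fderiv_apply_eq_zero (ha : 0 < a) (hu : Differentiable ℝ u)
    (hu₀ : ∀ t > 0, u (0, t) = 0)
    (hchar : ∀ x ∈ Ioo (0 : ℝ) 1, ∀ t > 0, fderiv ℝ u (x, t) (a, 1) = 0) :
    ∀ x ∈ Icc (0 : ℝ) 1, ∀ t > x / a, u (x, t) = 0 := by
  intro x hx t ht
  have hstart : 0 < t - x / a := sub_pos.2 ht
  have hend : ((0, t - x / a) : ℝ × ℝ) + (x / a) • (a, 1) = (x, t) := by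
    ext <;> simp [ha.ne']
  have hmove := eq_of_fderiv_apply_eq_zero_of_mem_Ioo hu (p := (0, t - x / a)) (v := (a, 1))
    (div_nonneg hx.1 ha.le) fun s hs => by
      have hsa : s * a < x := (lt_div_iff₀ ha).1 hs.2
      simp only [Prod.smul_mk, smul_eq_mul, mul_one, Prod.mk_add_mk, zero_add]
      exact hchar _ ⟨mul_pos hs.1 ha, by linarith [hx.2]⟩ _ (by linarith [hs.1])
  rw [hend] at hmove
  rw [hmove, hu₀ _ hstart]

theorem eq_zero_of_right_boundary_of_fderiv_apply_eq_zero (ha : 0 < a) (hu : Differentiable ℝ u)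
    (hu₁ : ∀ t > 1 / a, u (1, t) = 0)
    (hchar : ∀ x ∈ Icc (0 : ℝ) 1, ∀ t > x / a, fderiv ℝ u (x, t) (-a, 1) = 0) :
    ∀ x ∈ Icc (0 : ℝ) 1, ∀ t > 2 / a, u (x, t) = 0 := by
  intro x hx t ht
  set d := t - (1 - x) / a with hd
  have had : 1 < a * d := by
    have hat : 2 < a * t := by rwa [gt_iff_lt, div_lt_iff₀' ha] at ht
    rw [hd, mul_sub, mul_div_cancel₀ _ ha.ne']
    linarith [hx.1]
  have hend : ((1, d) : ℝ × ℝ) + ((1 - x) / a) • (-a, 1) = (x, t) := by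
    ext <;> simp [hd, ha.ne']
  have hmove := eq_of_fderiv_apply_eq_zero_of_mem_Ioo hu (p := (1, d)) (v := (-a, 1))
    (div_nonneg (sub_nonneg.2 hx.2) ha.le) fun s hs => by
      have hsa : s * a < 1 - x := (lt_div_iff₀ ha).1 hs.2
      simp only [Prod.smul_mk, smul_eq_mul, mul_one, mul_neg, Prod.mk_add_mk, ← sub_eq_add_neg]
      refine hchar _ ⟨by linarith [hx.1], by nlinarith [hs.1]⟩ _ ?_
      rw [gt_iff_lt, div_lt_iff₀' ha]
      nlinarith [hs.1]
  rw [hend] at hmove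
  rw [hmove, hu₁ _ ((div_lt_iff₀' ha).2 (by simpa using had))]

end Characteristics

/-- finite time extinction for the mirror problem (1),(5),(3).
Any `C²` solution of the wave equation `∂ₜ²w = a²∂ₓ²w` on `(0,1) × (0,∞)` with
boundary conditions `w(1,t) = q·(wₜ − a wₓ)(1,t)` and `(wₜ − a wₓ)(0,t) = 0` for
`t > 0` vanishes identically for `t > 2/a`, for any constant `q`. -/
theorem wave_q_boundary_finite_time_extinction
    (a q : ℝ) (ha : 0 < a) (w : ℝ → ℝ → ℝ)
    (hw : ContDiff ℝ 2 (fun p : ℝ × ℝ => w p.1 p.2))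
    -- the wave equation ∂ₜ²w − a²∂ₓ²w = 0 on (0,1)×(0,∞)
    (hpde : ∀ x ∈ Set.Ioo (0:ℝ) 1, ∀ t > (0:ℝ),
      deriv (deriv (w x)) t
        - a ^ 2 * deriv (fun y => deriv (fun z => w z t) y) x = 0)
    -- boundary condition at x = 1 : w(1,t) = q (wₜ − a wₓ)(1,t)
    (hbc1 : ∀ t > (0:ℝ),
      w 1 t = q * (deriv (w 1) t - a * deriv (fun y => w y t) 1))
    -- boundary condition at x = 0 : (wₜ − a wₓ)(0,t) = 0
    (hbc0 : ∀ t > (0:ℝ), deriv (w 0) t - a * deriv (fun y => w y t) 0 = 0) :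
    ∀ x ∈ Set.Icc (0:ℝ) 1, ∀ t > 2 / a, w x t = 0 := by
  have hw₁ : Differentiable ℝ (uncurry w) := hw.differentiable (by norm_num)
  have hw₂ : Differentiable ℝ (fderiv ℝ (uncurry w)) :=
    (hw.fderiv_right (m := 1) (by norm_num)).differentiable (by norm_num)
  have hinv : ∀ x ∈ Icc (0 : ℝ) 1, ∀ t > x / a, riemannInvariant a w (x, t) = 0 :=
    eq_zero_of_left_boundary_of_fderiv_apply_eq_zero ha (differentiable_riemannInvariant hw₂)
      (fun t ht => (riemannInvariant_eq (hw₁ _)).trans (hbc0 t ht))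
      (fun x hx t ht => (fderiv_riemannInvariant_apply hw).trans (hpde x hx t ht))
  have hright : ∀ t > 1 / a, w 1 t = 0 := fun t ht => by
    rw [hbc1 t (lt_trans (by positivity) ht), ← riemannInvariant_eq (hw₁ _),
      hinv 1 (right_mem_Icc.2 zero_le_one) t ht, mul_zero]
  exact eq_zero_of_right_boundary_of_fderiv_apply_eq_zero ha hw₁ hright hinv
end

section
/- Let a > 0, p ∈ ℝ, and let a₁ : [0,1]×[0,∞) → ℝ be a fixed twice continuously differentiable function whose partial derivatives up to order 2 are bounded. For every γ > 0 there exist ε > 0 and M > 0 such that the following holds: for every continuous function c : [0,1]×[0,∞) → ℝ with |c(x,t)| < ε for all (x,t), and every twice continuously differentiable function w : [0,1]×[0,∞) → ℝ satisfying (∂_t − a ∂_x + a₁(x,t))(∂_t + a ∂_x) w + c·w = 0 on (0,1)×(0,∞), together with the boundary conditions w(0,t) = p·(∂_t w + a ∂_x w)(0,t) and (∂_t w + a ∂_x w)(1,t) = 0 for all t > 0, one has for all t > 0: (∫_0^1 w(x,t)² dx)^{1/2} ≤ M e^{−γ t} · max{ (∫_0^1 [w(x,0)² + (∂_x w(x,0))²]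 dx)^{1/2}, (∫_0^1 (∂_t w(x,0))² dx)^{1/2} }. -/
/-!
With `U = ∂ₜW + a∂ₓW`, the equation is the first-order system `∂ₜW + a∂ₓW = U`,
`∂ₜU - a∂ₓU + a₁U + cW = 0`. For the weighted energy
`E(t) = ∫₀¹ (A e^{κx} U² + e^{-κx} W²) dx` with `A = p² + 1`, the time derivative of the density
is the `x`-derivative of the flux `a (A e^{κx} U² - e^{-κx} W²)` plus a quadratic form in
`(U, W)`. The boundary conditions make the flux through `x = 0` and `x = 1` dissipative, and once
`aκ ≥ 2γ + 2 sup |a₁| + 2` and `|c| < e^{-2κ} / A` the quadratic form is at most `-2γ` times the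
density, so `E(t) ≤ e^{-2γt} E(0)`. Finally `‖W(·,t)‖² ≤ e^κ E(t)`, and `E(0)` is bounded by
the `H¹ × L²` norm of the initial data.
-/

open MeasureTheory Set Filter Real Function

theorem le_exp_mul_of_hasDerivAt_le {V V' : ℝ → ℝ} {k t : ℝ} (hV : ContinuousOn V (Ici 0))
    (hV' : ∀ s > 0, HasDerivAt V (V' s) s) (hle : ∀ s > 0, V' s ≤ k * V s) (ht : 0 ≤ t) :
    V t ≤ exp (k * t) * V 0 := by
  have hderiv : ∀ s > 0, HasDerivAt (fun s => exp (-k * s) * V s)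
      (exp (-k * s) * (V' s - k * V s)) s := fun s hs =>
    (((hasDerivAt_id' s).const_mul (-k)).exp.mul (hV' s hs)).congr_deriv (by ring)
  have hanti : AntitoneOn (fun s => exp (-k * s) * V s) (Ici 0) := by
    refine antitoneOn_of_deriv_nonpos (convex_Ici 0)
      ((continuous_const_mul (-k)).rexp.continuousOn.mul hV) ?_ ?_ <;> rw [interior_Ici]
    · exact fun s hs => (hderiv s hs).differentiableAt.differentiableWithinAt
    · intro s hs
      rw [(hderiv s hs).deriv]
      exact mul_nonpos_of_nonneg_of_nonpos (exp_pos _).le (by linarith [hle s hs])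
  have h := hanti (mem_Ici.2 le_rfl) ht ht
  simp only [mul_zero, exp_zero, one_mul] at h
  calc V t = exp (k * t) * (exp (-k * t) * V t) := by
        rw [← mul_assoc, ← exp_add, ← add_mul, add_neg_cancel, zero_mul, exp_zero, one_mul]
    _ ≤ exp (k * t) * V 0 := by gcongr

theorem sqrt_le_mul_max_sqrt {X K I J : ℝ} (hK : 0 ≤ K) (hX : X ≤ K ^ 2 * max I J) :
    √X ≤ K * max √I √J := by
  calc √X ≤ √(K ^ 2 * max I J) := sqrt_le_sqrt hX
    _ = K * max √I √J := by
      rw [sqrt_mul (sq_nonneg K), sqrt_sq hK, sqrt_monotone.map_max]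

section Partials

variable {E : Type*} [NormedAddCommGroup E] [NormedSpace ℝ E] {F : ℝ × ℝ → E}

-- Through `deriv` of slices, `deriv (fun y => w y t) x` is `partialX (uncurry w) (x, t)`
-- by definition.
noncomputable def partialX (F : ℝ × ℝ → E) (q : ℝ × ℝ) : E := deriv (fun y => F (y, q.2)) q.1

noncomputable def partialT (F : ℝ × ℝ → E) (q : ℝ × ℝ) : E := deriv (fun s => F (q.1, s)) q.2

theorem DifferentiableAt.hasDerivAt_partialX {x t : ℝ} (hF : DifferentiableAt ℝ F (x, t)) :
    HasDerivAt (fun y => F (y, t)) (partialX F (x, t)) x :=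
  (hF.comp x (differentiableAt_id.prodMk (differentiableAt_const t))).hasDerivAt

theorem DifferentiableAt.hasDerivAt_partialT {x t : ℝ} (hF : DifferentiableAt ℝ F (x, t)) :
    HasDerivAt (fun s => F (x, s)) (partialT F (x, t)) t :=
  (hF.comp t ((differentiableAt_const x).prodMk differentiableAt_id)).hasDerivAt

theorem Differentiable.partialX_eq (hF : Differentiable ℝ F) :
    partialX F = fun q => fderiv ℝ F q (1, 0) := funext fun q =>
  (hF q).hasDerivAt_partialX.unique
    ((hF q).hasFDerivAt.comp_hasDerivAt q.1 ((hasDerivAt_id _).prodMk (hasDerivAt_const _ _)))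

theorem Differentiable.partialT_eq (hF : Differentiable ℝ F) :
    partialT F = fun q => fderiv ℝ F q (0, 1) := funext fun q =>
  (hF q).hasDerivAt_partialT.unique
    ((hF q).hasFDerivAt.comp_hasDerivAt q.2 ((hasDerivAt_const _ _).prodMk (hasDerivAt_id _)))

theorem ContDiff.contDiff_partialX {n : WithTop ℕ∞} (hF : ContDiff ℝ (n + 1) F) :
    ContDiff ℝ n (partialX F) := by
  rw [(hF.differentiable (by simp)).partialX_eq]
  exact (hF.fderiv_right le_rfl).clm_apply contDiff_const

theorem ContDiff.contDiff_partialT {n : WithTop ℕ∞} (hF : ContDiff ℝ (n + 1) F) :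
    ContDiff ℝ n (partialT F) := by
  rw [(hF.differentiable (by simp)).partialT_eq]
  exact (hF.fderiv_right le_rfl).clm_apply contDiff_const

theorem ContDiff.continuous_partialX (hF : ContDiff ℝ 1 F) : Continuous (partialX F) :=
  (hF.contDiff_partialX (n := 0)).continuous

theorem ContDiff.continuous_partialT (hF : ContDiff ℝ 1 F) : Continuous (partialT F) :=
  (hF.contDiff_partialT (n := 0)).continuous

theorem hasDerivAt_intervalIntegral_of_continuous_partial {F' : ℝ × ℝ → E}
    (hF : Continuous F) (hF' : Continuous F')
    (hderiv : ∀ x t, HasDerivAt (fun s => F (x, s)) (F' (x, t)) t) (a b t : ℝ) :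
    HasDerivAt (fun s => ∫ x in a..b, F (x, s)) (∫ x in a..b, F' (x, t)) t := by
  obtain ⟨C, hC⟩ := ((isCompact_uIcc (a := a) (b := b)).prod
    (isCompact_closedBall t 1)).exists_bound_of_continuousOn hF'.continuousOn
  refine (intervalIntegral.hasDerivAt_integral_of_dominated_loc_of_deriv_le (bound := fun _ => C)
    (Metric.closedBall_mem_nhds t one_pos)
    (Eventually.of_forall fun s => (hF.comp (.prodMk_left s)).aestronglyMeasurable)
    ((hF.comp (.prodMk_left t)).intervalIntegrable a b)
    (hF'.comp (.prodMk_left t)).aestronglyMeasurable ?_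
    intervalIntegrable_const (ae_of_all _ fun x _ s _ => hderiv x s)).2
  exact ae_of_all _ fun x hx s hs => hC (x, s) ⟨uIoc_subset_uIcc hx, hs⟩

end Partials

theorem dissipation_quadratic_form_le {a κ γ B ρ₁ ρ₂ α c u v : ℝ} (hρ₂ : 0 ≤ ρ₂) (hρ : ρ₂ ≤ ρ₁)
    (hc : |c| * ρ₁ ≤ ρ₂) (hα : |α| ≤ B) (hκ : 2 * γ + 2 * B + 2 ≤ a * κ) :
    -(a * κ) * (ρ₁ * u ^ 2 + ρ₂ * v ^ 2) - 2 * α * ρ₁ * u ^ 2 - 2 * c * ρ₁ * u * v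
      + 2 * ρ₂ * u * v ≤ -(2 * γ) * (ρ₁ * u ^ 2 + ρ₂ * v ^ 2) := by
  have hu : 0 ≤ ρ₁ * u ^ 2 := mul_nonneg (hρ₂.trans hρ) (sq_nonneg u)
  have hv : 0 ≤ ρ₂ * v ^ 2 := mul_nonneg hρ₂ (sq_nonneg v)
  have hαu : -(2 * α * ρ₁ * u ^ 2) ≤ 2 * B * (ρ₁ * u ^ 2) := by
    nlinarith [neg_abs_le α]
  have hcuv : -(2 * c * u * v) ≤ |c| * (u ^ 2 + v ^ 2) := by
    cases abs_cases c <;> nlinarith [sq_nonneg (u + v), sq_nonneg (u - v)]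
  have hcross_c : -(2 * c * ρ₁ * u * v) ≤ ρ₁ * u ^ 2 + ρ₂ * v ^ 2 := by
    nlinarith [mul_le_mul_of_nonneg_left hcuv (hρ₂.trans hρ), abs_nonneg c]
  have hcross : 2 * ρ₂ * u * v ≤ ρ₁ * u ^ 2 + ρ₂ * v ^ 2 := by
    nlinarith [mul_nonneg hρ₂ (sq_nonneg (u - v)), mul_le_mul_of_nonneg_right hρ (sq_nonneg u)]
  have hB : 0 ≤ B := (abs_nonneg α).trans hα
  nlinarith [mul_le_mul_of_nonneg_right hκ (add_nonneg hu hv), mul_nonneg hB hv]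

section Energy

variable {a A κ : ℝ} {W U : ℝ × ℝ → ℝ}

noncomputable def energyDensity (A κ : ℝ) (W U : ℝ × ℝ → ℝ) (q : ℝ × ℝ) : ℝ :=
  A * exp (κ * q.1) * U q ^ 2 + exp (-(κ * q.1)) * W q ^ 2

noncomputable def energyFlux (a A κ : ℝ) (W U : ℝ × ℝ → ℝ) (q : ℝ × ℝ) : ℝ :=
  a * (A * exp (κ * q.1) * U q ^ 2 - exp (-(κ * q.1)) * W q ^ 2)

noncomputable def energy (A κ : ℝ) (W U : ℝ × ℝ → ℝ) (t : ℝ) : ℝ :=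
  ∫ x in (0:ℝ)..1, energyDensity A κ W U (x, t)

theorem hasDerivAt_energyDensity (hW : Differentiable ℝ W) (hU : Differentiable ℝ U) (x t : ℝ) :
    HasDerivAt (fun s => energyDensity A κ W U (x, s))
      (2 * (A * exp (κ * x) * U (x, t) * partialT U (x, t)
        + exp (-(κ * x)) * W (x, t) * partialT W (x, t))) t := by
  have hU2 := ((hU (x, t)).hasDerivAt_partialT.pow 2).const_mul (A * exp (κ * x))
  have hW2 := ((hW (x, t)).hasDerivAt_partialT.pow 2).const_mul (exp (-(κ * x)))
  exact (hU2.add hW2).congr_deriv (by simp only [Nat.cast_ofNat, Nat.reduceSub, pow_one]; ring)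

theorem hasDerivAt_energyFlux (hW : Differentiable ℝ W) (hU : Differentiable ℝ U) (x t : ℝ) :
    HasDerivAt (fun y => energyFlux a A κ W U (y, t))
      (a * (A * exp (κ * x) * (κ * U (x, t) ^ 2 + 2 * U (x, t) * partialX U (x, t))
        - exp (-(κ * x)) * (-κ * W (x, t) ^ 2 + 2 * W (x, t) * partialX W (x, t)))) x := by
  have hκx := (hasDerivAt_id' x).const_mul κ
  have hU2 := (hκx.exp.const_mul A).fun_mul ((hU (x, t)).hasDerivAt_partialX.fun_pow 2)
  have hW2 := hκx.fun_neg.exp.fun_mul ((hW (x, t)).hasDerivAt_partialX.fun_pow 2)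
  exact ((hU2.fun_sub hW2).const_mul a).congr_deriv
    (by simp only [Nat.cast_ofNat, Nat.reduceSub, pow_one]; ring)

theorem hasDerivAt_energy (hW : ContDiff ℝ 1 W) (hU : ContDiff ℝ 1 U) (t : ℝ) :
    HasDerivAt (energy A κ W U)
      (∫ x in (0:ℝ)..1, 2 * (A * exp (κ * x) * U (x, t) * partialT U (x, t)
        + exp (-(κ * x)) * W (x, t) * partialT W (x, t))) t := by
  have := hW.continuous
  have := hU.continuous
  have := hW.continuous_partialT
  have := hU.continuous_partialT
  exact hasDerivAt_intervalIntegral_of_continuous_partial (F := energyDensity A κ W U)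
    (F' := fun q => 2 * (A * exp (κ * q.1) * U q * partialT U q
      + exp (-(κ * q.1)) * W q * partialT W q)) (by unfold energyDensity; fun_prop)
    (by fun_prop) (hasDerivAt_energyDensity (hW.differentiable one_ne_zero)
      (hU.differentiable one_ne_zero)) 0 1 t

theorem integral_sq_le_exp_mul_energy (hA : 0 ≤ A) (hκ : 0 ≤ κ) (hW : Continuous W)
    (hU : Continuous U) (t : ℝ) :
    ∫ x in (0:ℝ)..1, W (x, t) ^ 2 ≤ exp κ * energy A κ W U t := by
  rw [energy, ← intervalIntegral.integral_const_mul]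
  refine intervalIntegral.integral_mono_on zero_le_one
    (by apply Continuous.intervalIntegrable; fun_prop)
    (by apply Continuous.intervalIntegrable; unfold energyDensity; fun_prop) fun x hx => ?_
  have hexp : 1 ≤ exp κ * exp (-(κ * x)) := by
    rw [← exp_add]
    exact one_le_exp (by nlinarith [hx.2])
  have hU2 : 0 ≤ exp κ * (A * exp (κ * x) * U (x, t) ^ 2) := by positivity
  unfold energyDensity
  nlinarith [mul_le_mul_of_nonneg_right hexp (sq_nonneg (W (x, t)))]

theorem energy_le_mul_max (hA : 0 ≤ A) (hκ : 0 ≤ κ) (hW : ContDiff ℝ 1 W) {t : ℝ}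
    (hU : ∀ x, U (x, t) = partialT W (x, t) + a * partialX W (x, t)) :
    energy A κ W U t ≤ (2 * A * exp κ * (1 + a ^ 2) + 1) *
      max (∫ x in (0:ℝ)..1, W (x, t) ^ 2 + partialX W (x, t) ^ 2)
        (∫ x in (0:ℝ)..1, partialT W (x, t) ^ 2) := by
  have := hW.continuous
  have := hW.continuous_partialX
  have := hW.continuous_partialT
  set I := ∫ x in (0:ℝ)..1, W (x, t) ^ 2 + partialX W (x, t) ^ 2
  set J := ∫ x in (0:ℝ)..1, partialT W (x, t) ^ 2
  have hIint : IntervalIntegrable (fun x => W (x, t) ^ 2 + partialX W (x, t) ^ 2) volume 0 1 := by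
    apply Continuous.intervalIntegrable; fun_prop
  have hJint : IntervalIntegrable (fun x => partialT W (x, t) ^ 2) volume 0 1 := by
    apply Continuous.intervalIntegrable; fun_prop
  have hpoint : ∀ x ∈ Icc (0:ℝ) 1, energyDensity A κ W U (x, t) ≤
      2 * A * exp κ * partialT W (x, t) ^ 2
        + (2 * A * exp κ * a ^ 2 + 1) * (W (x, t) ^ 2 + partialX W (x, t) ^ 2) := by
    intro x hx
    have hU2 : U (x, t) ^ 2 ≤ 2 * partialT W (x, t) ^ 2 + 2 * a ^ 2 * partialX W (x, t) ^ 2 := by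
      rw [hU]
      nlinarith [sq_nonneg (partialT W (x, t) - a * partialX W (x, t))]
    have hρ₁ : A * exp (κ * x) ≤ A * exp κ := by
      gcongr
      nlinarith [hx.2]
    have hρ₂ : exp (-(κ * x)) ≤ 1 := exp_le_one_iff.2 (by nlinarith [hx.1])
    have hUterm := mul_le_mul hρ₁ hU2 (sq_nonneg _) (by positivity)
    have hWterm := mul_le_mul_of_nonneg_right hρ₂ (sq_nonneg (W (x, t)))
    unfold energyDensity
    nlinarith [mul_nonneg (mul_nonneg hA (exp_pos κ).le) (mul_nonneg (sq_nonneg a)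
      (sq_nonneg (W (x, t)))), sq_nonneg (partialX W (x, t))]
  calc energy A κ W U t
      ≤ ∫ x in (0:ℝ)..1, 2 * A * exp κ * partialT W (x, t) ^ 2
          + (2 * A * exp κ * a ^ 2 + 1) * (W (x, t) ^ 2 + partialX W (x, t) ^ 2) :=
        intervalIntegral.integral_mono_on zero_le_one
          (by simp only [energyDensity, hU]; apply Continuous.intervalIntegrable; fun_prop)
          ((hJint.const_mul _).add (hIint.const_mul _)) hpoint
    _ = 2 * A * exp κ * J + (2 * A * exp κ * a ^ 2 + 1) * I := by
        rw [intervalIntegral.integral_add (hJint.const_mul _) (hIint.const_mul _),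
          intervalIntegral.integral_const_mul, intervalIntegral.integral_const_mul]
    _ ≤ 2 * A * exp κ * max I J + (2 * A * exp κ * a ^ 2 + 1) * max I J := by
        gcongr
        exacts [le_max_right I J, le_max_left I J]
    _ = (2 * A * exp κ * (1 + a ^ 2) + 1) * max I J := by ring

end Energy

structure IsTransportSystemSolution (a p : ℝ) (α c W U : ℝ × ℝ → ℝ) : Prop where
  contDiff_W : ContDiff ℝ 1 W
  contDiff_U : ContDiff ℝ 1 U
  partialT_add_partialX : ∀ q, partialT W q + a * partialX W q = U q
  equation : ∀ x ∈ Ioo (0:ℝ) 1, ∀ t > (0:ℝ),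
    partialT U (x, t) - a * partialX U (x, t) + α (x, t) * U (x, t) + c (x, t) * W (x, t) = 0
  boundary_left : ∀ t > (0:ℝ), W (0, t) = p * U (0, t)
  boundary_right : ∀ t > (0:ℝ), U (1, t) = 0

namespace IsTransportSystemSolution

variable {a p A B κ γ : ℝ} {α c W U : ℝ × ℝ → ℝ}

theorem energyDensity_rate_le (h : IsTransportSystemSolution a p α c W U) (hA : 1 ≤ A)
    (hκ : 0 ≤ κ) (hα : ∀ q, |α q| ≤ B)
    (hc : ∀ x ∈ Ioo (0:ℝ) 1, ∀ t > (0:ℝ), |c (x, t)| * (A * exp (2 * κ)) ≤ 1)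
    (hγ : 2 * γ + 2 * B + 2 ≤ a * κ) {x t : ℝ} (hx : x ∈ Ioo (0:ℝ) 1) (ht : 0 < t) :
    2 * (A * exp (κ * x) * U (x, t) * partialT U (x, t)
        + exp (-(κ * x)) * W (x, t) * partialT W (x, t))
      ≤ a * (A * exp (κ * x) * (κ * U (x, t) ^ 2 + 2 * U (x, t) * partialX U (x, t))
          - exp (-(κ * x)) * (-κ * W (x, t) ^ 2 + 2 * W (x, t) * partialX W (x, t)))
        - 2 * γ * energyDensity A κ W U (x, t) := by
  have hρ : exp (-(κ * x)) ≤ A * exp (κ * x) :=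
    calc exp (-(κ * x)) ≤ 1 * exp (κ * x) := by
          rw [one_mul]; exact exp_le_exp.2 (by nlinarith [hx.1])
      _ ≤ A * exp (κ * x) := by gcongr
  have hcρ : |c (x, t)| * (A * exp (κ * x)) ≤ exp (-(κ * x)) :=
    calc |c (x, t)| * (A * exp (κ * x))
        = |c (x, t)| * (A * exp (2 * κ)) * (exp (-(κ * x)) * exp (2 * κ * (x - 1))) := by
          rw [← exp_add, mul_assoc _ _ (exp _), mul_assoc A, ← exp_add]; ring_nf
      _ ≤ 1 * (exp (-(κ * x)) * 1) := by
          gcongr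
          exacts [hc x hx t ht, exp_le_one_iff.2 (by nlinarith [hx.2])]
      _ = exp (-(κ * x)) := by ring
  have hWt : partialT W (x, t) = U (x, t) - a * partialX W (x, t) := by
    linarith [h.partialT_add_partialX (x, t)]
  have hUt : partialT U (x, t) = a * partialX U (x, t) - α (x, t) * U (x, t)
      - c (x, t) * W (x, t) := by
    linarith [h.equation x hx t ht]
  rw [hWt, hUt, energyDensity]
  linear_combination dissipation_quadratic_form_le (u := U (x, t)) (v := W (x, t))
    (exp_pos _).le hρ hcρ (hα (x, t)) hγ

theorem energyFlux_one_sub_energyFlux_zero_nonpos (h : IsTransportSystemSolution a p α c W U)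
    (ha : 0 ≤ a) (hA : p ^ 2 ≤ A) {t : ℝ} (ht : 0 < t) :
    energyFlux a A κ W U (1, t) - energyFlux a A κ W U (0, t) ≤ 0 := by
  simp only [energyFlux, h.boundary_right t ht, h.boundary_left t ht, mul_zero, exp_zero, neg_zero]
  nlinarith [mul_nonneg ha (mul_nonneg (exp_pos (-(κ * 1))).le (sq_nonneg (W (1, t)))),
    mul_nonneg ha (mul_nonneg (sub_nonneg.2 hA) (sq_nonneg (U (0, t))))]

theorem energy_le_exp_mul (h : IsTransportSystemSolution a p α c W U) (ha : 0 ≤ a)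
    (hA : 1 ≤ A) (hpA : p ^ 2 ≤ A) (hκ : 0 ≤ κ) (hα : ∀ q, |α q| ≤ B)
    (hc : ∀ x ∈ Ioo (0:ℝ) 1, ∀ t > (0:ℝ), |c (x, t)| * (A * exp (2 * κ)) ≤ 1)
    (hγ : 2 * γ + 2 * B + 2 ≤ a * κ) {t : ℝ} (ht : 0 ≤ t) :
    energy A κ W U t ≤ exp (-(2 * γ) * t) * energy A κ W U 0 := by
  have hderiv := hasDerivAt_energy (A := A) (κ := κ) h.contDiff_W h.contDiff_U
  have := h.contDiff_W.continuous
  have := h.contDiff_U.continuous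
  have := h.contDiff_W.continuous_partialX
  have := h.contDiff_U.continuous_partialX
  have := h.contDiff_W.continuous_partialT
  have := h.contDiff_U.continuous_partialT
  refine le_exp_mul_of_hasDerivAt_le (fun s _ => (hderiv s).continuousAt.continuousWithinAt)
    (fun s _ => hderiv s) (fun s hs => ?_) ht
  calc _ ≤ ∫ x in (0:ℝ)..1,
        a * (A * exp (κ * x) * (κ * U (x, s) ^ 2 + 2 * U (x, s) * partialX U (x, s))
          - exp (-(κ * x)) * (-κ * W (x, s) ^ 2 + 2 * W (x, s) * partialX W (x, s)))
        - 2 * γ * energyDensity A κ W U (x, s) :=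
        intervalIntegral.integral_mono_on_of_le_Ioo zero_le_one
          (by apply Continuous.intervalIntegrable; fun_prop)
          (by apply Continuous.intervalIntegrable; unfold energyDensity; fun_prop)
          fun x hx => h.energyDensity_rate_le hA hκ hα hc hγ hx hs
    _ = energyFlux a A κ W U (1, s) - energyFlux a A κ W U (0, s) - 2 * γ * energy A κ W U s := by
        rw [intervalIntegral.integral_sub (by apply Continuous.intervalIntegrable; fun_prop)
          (by apply Continuous.intervalIntegrable; unfold energyDensity; fun_prop),
          intervalIntegral.integral_eq_sub_of_hasDerivAt
            (fun x _ => hasDerivAt_energyFlux (h.contDiff_W.differentiable one_ne_zero)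
              (h.contDiff_U.differentiable one_ne_zero) x s)
            (by apply Continuous.intervalIntegrable; fun_prop),
          intervalIntegral.integral_const_mul, energy]
    _ ≤ -(2 * γ) * energy A κ W U s := by
        linarith [h.energyFlux_one_sub_energyFlux_zero_nonpos (κ := κ) ha hpA hs]

end IsTransportSystemSolution

theorem generalized_wave_L2_exponential_stability_general
    (a p : ℝ) (ha : 0 < a)
    (a₁ : ℝ → ℝ → ℝ)
    (ha₁b : ∃ B : ℝ, ∀ k : ℕ, k ≤ 2 → ∀ q : ℝ × ℝ,
      ‖iteratedFDeriv ℝ k (fun q : ℝ × ℝ => a₁ q.1 q.2) q‖ ≤ B) :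
    ∀ γ > (0:ℝ), ∃ ε > (0:ℝ), ∃ M > (0:ℝ),
      ∀ c : ℝ → ℝ → ℝ,
        Continuous (fun q : ℝ × ℝ => c q.1 q.2) →
        (∀ x ∈ Set.Icc (0:ℝ) 1, ∀ t ≥ (0:ℝ), |c x t| < ε) →
      ∀ w : ℝ → ℝ → ℝ,
        ContDiff ℝ 2 (fun q : ℝ × ℝ => w q.1 q.2) →
        -- (∂ₜ − a∂ₓ + a₁)(∂ₜ + a∂ₓ)w + c·w = 0 on (0,1)×(0,∞), i.e.
        -- u := ∂ₜw + a∂ₓw satisfies ∂ₜu − a∂ₓu + a₁·u + c·w = 0 there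
        (∀ x ∈ Set.Ioo (0:ℝ) 1, ∀ t > (0:ℝ),
          deriv (fun s => deriv (w x) s + a * deriv (fun y => w y s) x) t
            - a * deriv (fun y => deriv (w y) t + a * deriv (fun z => w z t) y) x
            + a₁ x t * (deriv (w x) t + a * deriv (fun y => w y t) x)
            + c x t * w x t = 0) →
        -- boundary condition at x = 0 : w(0,t) = p (wₜ + a wₓ)(0,t)
        (∀ t > (0:ℝ),
          w 0 t = p * (deriv (w 0) t + a * deriv (fun y => w y t) 0)) →
        -- boundary condition at x = 1 : (wₜ + a wₓ)(1,t) = 0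
        (∀ t > (0:ℝ),
          deriv (w 1) t + a * deriv (fun y => w y t) 1 = 0) →
      ∀ t > (0:ℝ),
        Real.sqrt (∫ x in (0:ℝ)..1, (w x t) ^ 2) ≤
          M * Real.exp (-γ * t) *
            max (Real.sqrt (∫ x in (0:ℝ)..1,
                  ((w x 0) ^ 2 + (deriv (fun y => w y 0) x) ^ 2)))
                (Real.sqrt (∫ x in (0:ℝ)..1, (deriv (w x) 0) ^ 2)) := by
  intro γ hγ
  obtain ⟨B, hB⟩ := ha₁b
  have hα : ∀ q, |uncurry a₁ q| ≤ B := fun q => by simpa [uncurry] using hB 0 (by norm_num) q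
  have hB0 : 0 ≤ B := (abs_nonneg _).trans (hα 0)
  set κ := (2 * γ + 2 * B + 2) / a with hκ
  have hκ0 : 0 ≤ κ := by positivity
  set A := p ^ 2 + 1
  set C := 2 * A * exp κ * (1 + a ^ 2) + 1
  refine ⟨1 / (A * exp (2 * κ)), by positivity, √(exp κ * C), by positivity, ?_⟩
  intro c _ hc w hw hpde hbc0 hbc1 t ht
  set U := fun q => partialT (uncurry w) q + a * partialX (uncurry w) q
  have hw' : ContDiff ℝ (1 + 1) (uncurry w) := hw
  have hsol : IsTransportSystemSolution a p (uncurry a₁) (uncurry c) (uncurry w) U :=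
    ⟨hw.of_le one_le_two, hw'.contDiff_partialT.add (contDiff_const.mul hw'.contDiff_partialX),
      fun _ => rfl, hpde, hbc0, hbc1⟩
  refine sqrt_le_mul_max_sqrt (by positivity) ?_
  change ∫ x in (0:ℝ)..1, uncurry w (x, t) ^ 2 ≤ _ * max
    (∫ x in (0:ℝ)..1, uncurry w (x, 0) ^ 2 + partialX (uncurry w) (x, 0) ^ 2)
    (∫ x in (0:ℝ)..1, partialT (uncurry w) (x, 0) ^ 2)
  calc _ ≤ exp κ * energy A κ (uncurry w) U t :=
        integral_sq_le_exp_mul_energy (by positivity) hκ0 hsol.contDiff_W.continuous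
          hsol.contDiff_U.continuous t
    _ ≤ exp κ * (exp (-(2 * γ) * t) * energy A κ (uncurry w) U 0) := by
        gcongr
        refine hsol.energy_le_exp_mul ha.le (by simp [A, sq_nonneg]) (by simp [A]) hκ0 hα
          (fun x hx s hs => ?_) (by rw [hκ, mul_div_cancel₀ _ ha.ne']) ht.le
        exact ((lt_div_iff₀ (by positivity)).1 (hc x (Ioo_subset_Icc_self hx) s hs.le)).le
    _ ≤ exp κ * (exp (-(2 * γ) * t) * (C * max _ _)) := by
        gcongr
        exact energy_le_mul_max (by positivity) hκ0 hsol.contDiff_W fun _ => rfl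
    _ = (√(exp κ * C) * exp (-γ * t)) ^ 2 * max _ _ := by
        rw [mul_pow, sq_sqrt (by positivity), ← exp_nat_mul]
        ring_nf

/-- extension of Theorem 1 to equations with a first-order term,
Section 3.3 of the paper, for classical solutions. Let `a > 0`, `p ∈ ℝ`, and let `a₁`
be a fixed `C²` function with partial derivatives up to order 2 bounded. For every
`γ > 0` there exist `ε > 0` and `M > 0` such that for every continuous `c` with
`|c| < ε` and every `C²` solution `w` of
`(∂ₜ − a∂ₓ + a₁)(∂ₜ + a∂ₓ)w + c·w = 0` with the boundary conditions
`w(0,t) = p·(wₜ + a wₓ)(0,t)`, `(wₜ + a wₓ)(1,t) = 0`, one has, for all `t > 0`,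
`‖w(·,t)‖_{L²} ≤ M e^{−γt} max(‖w(·,0)‖_{H¹}, ‖wₜ(·,0)‖_{L²})`. -/
theorem generalized_wave_L2_exponential_stability
    (a p : ℝ) (ha : 0 < a)
    (a₁ : ℝ → ℝ → ℝ)
    (ha₁ : ContDiff ℝ 2 (fun q : ℝ × ℝ => a₁ q.1 q.2))
    (ha₁b : ∃ B : ℝ, ∀ k : ℕ, k ≤ 2 → ∀ q : ℝ × ℝ,
      ‖iteratedFDeriv ℝ k (fun q : ℝ × ℝ => a₁ q.1 q.2) q‖ ≤ B) :
    ∀ γ > (0:ℝ), ∃ ε > (0:ℝ), ∃ M > (0:ℝ),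
      ∀ c : ℝ → ℝ → ℝ,
        Continuous (fun q : ℝ × ℝ => c q.1 q.2) →
        (∀ x ∈ Set.Icc (0:ℝ) 1, ∀ t ≥ (0:ℝ), |c x t| < ε) →
      ∀ w : ℝ → ℝ → ℝ,
        ContDiff ℝ 2 (fun q : ℝ × ℝ => w q.1 q.2) →
        -- (∂ₜ − a∂ₓ + a₁)(∂ₜ + a∂ₓ)w + c·w = 0 on (0,1)×(0,∞), i.e.
        -- u := ∂ₜw + a∂ₓw satisfies ∂ₜu − a∂ₓu + a₁·u + c·w = 0 there
        (∀ x ∈ Set.Ioo (0:ℝ) 1, ∀ t > (0:ℝ),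
          deriv (fun s => deriv (w x) s + a * deriv (fun y => w y s) x) t
            - a * deriv (fun y => deriv (w y) t + a * deriv (fun z => w z t) y) x
            + a₁ x t * (deriv (w x) t + a * deriv (fun y => w y t) x)
            + c x t * w x t = 0) →
        -- boundary condition at x = 0 : w(0,t) = p (wₜ + a wₓ)(0,t)
        (∀ t > (0:ℝ),
          w 0 t = p * (deriv (w 0) t + a * deriv (fun y => w y t) 0)) →
        -- boundary condition at x = 1 : (wₜ + a wₓ)(1,t) = 0
        (∀ t > (0:ℝ),
          deriv (w 1) t + a * deriv (fun y => w y t) 1 = 0) →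
      ∀ t > (0:ℝ),
        Real.sqrt (∫ x in (0:ℝ)..1, (w x t) ^ 2) ≤
          M * Real.exp (-γ * t) *
            max (Real.sqrt (∫ x in (0:ℝ)..1,
                  ((w x 0) ^ 2 + (deriv (fun y => w y 0) x) ^ 2)))
                (Real.sqrt (∫ x in (0:ℝ)..1, (deriv (w x) 0) ^ 2)) :=
  generalized_wave_L2_exponential_stability_general a p ha a₁ ha₁b
end
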